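/- arXiv:2109.15096 — 4 statements merged into one kernel-verified Lean document; each statement's English description precedes it below -/
import Mathlib

section
/- The liquidity premium λ(q) = θ[u'(q) - c'(q)] / [(1-θ)u'(q) + θc'(q)] is strictly decreasing on any interval where u'' < 0, c'' ≥ 0, u' > 0 and u' > c' > 0. -/
/-!
Dividing numerator and denominator by `c'` writes `λ = φ ∘ (u' / c')` with the Möbius map
`φ r = (θ r - θ) / ((1 - θ) r + θ)`, whose determinant `θ² + θ(1 - θ) = θ` is positive, so `φ` is
strictly increasing on `r > 0`. The ratio `u' / c'` is strictly decreasing, since `u'' < 0` makes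
the positive numerator strictly decrease and `c'' ≥ 0` makes the positive denominator increase.
-/

open Set

theorem strictMonoOn_div_affine {a b c d : ℝ} {s : Set ℝ} (hdet : 0 < a * d - b * c)
    (hs : ∀ x ∈ s, 0 < c * x + d) : StrictMonoOn (fun x => (a * x + b) / (c * x + d)) s := by
  intro x hx y hy hxy
  rw [div_lt_div_iff₀ (hs x hx) (hs y hy)]
  nlinarith [mul_pos hdet (sub_pos.mpr hxy)]

theorem StrictAntiOn.div_of_monotoneOn {f g : ℝ → ℝ} {s : Set ℝ} (hf : StrictAntiOn f s)
    (hg : MonotoneOn g s) (hf₀ : ∀ x ∈ s, 0 ≤ f x) (hg₀ : ∀ x ∈ s, 0 < g x) :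
    StrictAntiOn (fun x => f x / g x) s := by
  intro x hx y hy hxy
  calc f y / g y ≤ f y / g x := div_le_div_of_nonneg_left (hf₀ y hy) (hg₀ x hx) (hg hx hy hxy.le)
    _ < f x / g x := div_lt_div_of_pos_right (hf hx hy hxy) (hg₀ x hx)

theorem stmt_2_general (u c : ℝ → ℝ) (θ : ℝ) (I : Set ℝ)
    (hθ0 : 0 < θ) (hθ1 : θ ≤ 1)
    (hI : I.OrdConnected)
    (hu' : Differentiable ℝ (deriv u))
    (hc' : Differentiable ℝ (deriv c))
    (h1 : ∀ q ∈ I, deriv c q < deriv u q)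
    (h2 : ∀ q ∈ I, 0 < deriv c q)
    (h3 : ∀ q ∈ I, deriv (deriv u) q < 0)
    (h4 : ∀ q ∈ I, 0 ≤ deriv (deriv c) q)
    (lam : ℝ → ℝ)
    (hlam : lam = fun q => θ * (deriv u q - deriv c q) / ((1 - θ) * deriv u q + θ * deriv c q)) :
    StrictAntiOn lam I := by
  have hu'_pos : ∀ q ∈ I, 0 < deriv u q := fun q hq => (h2 q hq).trans (h1 q hq)
  have hu'_anti : StrictAntiOn (deriv u) I :=
    strictAntiOn_of_deriv_neg hI.convex hu'.continuous.continuousOn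
      fun q hq => h3 q (interior_subset hq)
  have hc'_mono : MonotoneOn (deriv c) I :=
    monotoneOn_of_deriv_nonneg hI.convex hc'.continuous.continuousOn hc'.differentiableOn
      fun q hq => h4 q (interior_subset hq)
  have hratio : StrictAntiOn (fun q => deriv u q / deriv c q) I :=
    hu'_anti.div_of_monotoneOn hc'_mono (fun q hq => (hu'_pos q hq).le) h2
  have hmobius : StrictMonoOn (fun r => (θ * r + -θ) / ((1 - θ) * r + θ)) (Ioi 0) :=
    strictMonoOn_div_affine (by nlinarith) fun r (hr : 0 < r) => by nlinarith
  refine (hmobius.comp_strictAntiOn hratio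
    fun q hq => div_pos (hu'_pos q hq) (h2 q hq)).congr fun q hq => ?_
  have hc'q := (h2 q hq).ne'
  simp only [hlam, Function.comp_apply]
  field_simp
  ring

/-- The liquidity premium `λ q = θ(u' q - c' q)/((1-θ)u' q + θ c' q)` is strictly
decreasing on any interval where `u'' < 0`, `c'' ≥ 0`, and `u' > c' > 0`. -/
theorem stmt_2 (u c : ℝ → ℝ) (θ : ℝ) (I : Set ℝ)
    (hθ0 : 0 < θ) (hθ1 : θ ≤ 1)
    (hI : I.OrdConnected)
    (hu : Differentiable ℝ u) (hu' : Differentiable ℝ (deriv u))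
    (hc : Differentiable ℝ c) (hc' : Differentiable ℝ (deriv c))
    (h1 : ∀ q ∈ I, deriv c q < deriv u q)
    (h2 : ∀ q ∈ I, 0 < deriv c q)
    (h3 : ∀ q ∈ I, deriv (deriv u) q < 0)
    (h4 : ∀ q ∈ I, 0 ≤ deriv (deriv c) q)
    (lam : ℝ → ℝ)
    (hlam : lam = fun q => θ * (deriv u q - deriv c q) / ((1 - θ) * deriv u q + θ * deriv c q)) :
    StrictAntiOn lam I :=
  stmt_2_general u c θ I hθ0 hθ1 hI hu' hc' h1 h2 h3 h4 lam hlam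
end

section
/- In the scarce-reserves equilibrium, the deposit rate is strictly increasing in the nominal interest rate: if i_d solves i_d = i_r - γ'(r̂) + [(1+i)/(1+i_d) - 1 - η'(κr̂)]·κ with 1 + i_d > 0, then ∂i_d/∂i = [χ(1+i_d)/(1-χ) + (1+i)/(1+i_d)]^{-1} > 0, where κ = (1-χ)/χ. -/
/-- In the scarce-reserves equilibrium the deposit rate is strictly increasing in
the nominal interest rate: if `i_d` solves
`i_d = i_r - γ'(r̂) + ((1+i)/(1+i_d) - 1 - η'(κ r̂)) κ` (with `1 + i_d > 0`) on an
open set of nominal rates, then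
`∂i_d/∂i = (χ(1+i_d)/(1-χ) + (1+i)/(1+i_d))⁻¹ > 0`, where `κ = (1-χ)/χ`. -/
theorem stmt_5 (χ ir rhat : ℝ) (γ' η' : ℝ → ℝ) (id_ : ℝ → ℝ) (S : Set ℝ) (i : ℝ)
    (hχ0 : 0 < χ) (hχ1 : χ < 1) (hrhat : 0 < rhat)
    (hS : IsOpen S) (hiS : i ∈ S)
    (hdiff : ∀ j ∈ S, DifferentiableAt ℝ id_ j)
    (hdom : ∀ j ∈ S, -1 < j ∧ 0 < 1 + id_ j)
    (heq : ∀ j ∈ S, id_ j = ir - γ' rhat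
        + ((1 + j)/(1 + id_ j) - 1 - η' ((1 - χ)/χ * rhat)) * ((1 - χ)/χ)) :
    deriv id_ i = (χ * (1 + id_ i)/(1 - χ) + (1 + i)/(1 + id_ i))⁻¹ ∧
    0 < deriv id_ i := by
  set κ : ℝ := (1 - χ)/χ with hκ
  have hκpos : 0 < κ := div_pos (by linarith) hχ0
  obtain ⟨hi1, hid1⟩ := hdom i hiS
  have hdi := hdiff i hiS
  set A : ℝ := ir - γ' rhat - κ * (1 + η' (κ * rhat)) with hA
  -- polynomial form of the fixed point equation
  have hfg : ∀ j ∈ S, id_ j * (1 + id_ j) = A * (1 + id_ j) + κ * (1 + j) := by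
    intro j hj
    have h := heq j hj
    have h2 := (hdom j hj).2
    have hne : (1 + id_ j) ≠ 0 := ne_of_gt h2
    field_simp at h
    rw [hA]
    linarith [h]
  set d : ℝ := deriv id_ i with hd
  have hf : HasDerivAt (fun j => id_ j * (1 + id_ j)) (d * (1 + id_ i) + id_ i * d) i :=
    hdi.hasDerivAt.mul (hdi.hasDerivAt.const_add 1)
  have hg : HasDerivAt (fun j => A * (1 + id_ j) + κ * (1 + j))
      (A * d + κ * 1) i :=
    ((hdi.hasDerivAt.const_add 1).const_mul A).add
      (((hasDerivAt_id i).const_add 1).const_mul κ)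
  have hev : (fun j => id_ j * (1 + id_ j)) =ᶠ[nhds i]
      (fun j => A * (1 + id_ j) + κ * (1 + j)) := by
    filter_upwards [hS.mem_nhds hiS] with j hj using hfg j hj
  have hkey : d * (1 + id_ i) + id_ i * d = A * d + κ * 1 := by
    have h0 := hev.deriv_eq
    rw [hf.deriv, hg.deriv] at h0
    exact h0
  -- relation giving A in terms of the equilibrium values at i
  have hArel : id_ i * (1 + id_ i) = A * (1 + id_ i) + κ * (1 + i) := hfg i hiS
  have hune : (1 + id_ i) ≠ 0 := ne_of_gt hid1
  have hT : 0 < χ * (1 + id_ i)/(1 - χ) + (1 + i)/(1 + id_ i) := by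
    have h1 : 0 < χ * (1 + id_ i)/(1 - χ) :=
      div_pos (mul_pos hχ0 hid1) (by linarith)
    have h2 : 0 < (1 + i)/(1 + id_ i) := div_pos (by linarith) hid1
    linarith
  have hTne : (χ * (1 + id_ i)/(1 - χ) + (1 + i)/(1 + id_ i)) ≠ 0 := ne_of_gt hT
  have hmul : d * (χ * (1 + id_ i)/(1 - χ) + (1 + i)/(1 + id_ i)) = 1 := by
    have hκne : κ ≠ 0 := ne_of_gt hκpos
    have hχne : χ ≠ 0 := ne_of_gt hχ0
    have hχ1ne : (1 : ℝ) - χ ≠ 0 := by intro h; linarith [h]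
    have hκχ : κ * χ = 1 - χ := by rw [hκ, div_mul_cancel₀ _ hχne]
    rw [div_add_div _ _ hχ1ne hune, mul_div_assoc', div_eq_one_iff_eq (mul_ne_zero hχ1ne hune)]
    linear_combination (χ * (1 + id_ i)) * hkey - (χ * d) * hArel - (d * (1 + i) - (1 + id_ i)) * hκχ
  have hdeq : d = (χ * (1 + id_ i)/(1 - χ) + (1 + i)/(1 + id_ i))⁻¹ :=
    eq_inv_of_mul_eq_one_left (by linarith [hmul, mul_comm d (χ * (1 + id_ i)/(1 - χ) + (1 + i)/(1 + id_ i))])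
  refine ⟨hdeq, ?_⟩
  rw [hdeq]
  exact inv_pos.mpr hT
end

section
/- In the scarce-reserves equilibrium, the deposit rate is strictly increasing in the interest on reserves: differentiating the defining equation yields (1 + κ(1+i)/(1+i_d)²)·(∂i_d/∂i_r) = 1, i.e. ∂i_d/∂i_r = [1 + κ(1+i)/(1+i_d)²]^{-1} > 0. -/
/-- In the scarce-reserves equilibrium the deposit rate is strictly increasing in
the interest on reserves: differentiating the defining equation yields
`(1 + κ(1+i)/(1+i_d)²) ∂i_d/∂i_r = 1`, hence `∂i_d/∂i_r > 0`, where `κ = (1-χ)/χ`. -/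
theorem stmt_6 (χ i rhat : ℝ) (γ' η' : ℝ → ℝ) (id_ : ℝ → ℝ) (S : Set ℝ) (ir : ℝ)
    (hχ0 : 0 < χ) (hχ1 : χ < 1) (hi : -1 < i) (hrhat : 0 < rhat)
    (hS : IsOpen S) (hirS : ir ∈ S)
    (hdiff : ∀ x ∈ S, DifferentiableAt ℝ id_ x)
    (hdom : ∀ x ∈ S, 0 < 1 + id_ x)
    (heq : ∀ x ∈ S, id_ x = x - γ' rhat
        + ((1 + i)/(1 + id_ x) - 1 - η' ((1 - χ)/χ * rhat)) * ((1 - χ)/χ)) :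
    (1 + ((1 - χ)/χ) * (1 + i)/(1 + id_ ir)^2) * deriv id_ ir = 1 ∧
    0 < deriv id_ ir := by
  set κ := (1 - χ)/χ with hκdef
  have hκ : 0 < κ := div_pos (by linarith) hχ0
  have hpos := hdom ir hirS
  have hne : (1 + id_ ir) ≠ 0 := ne_of_gt hpos
  have hd : HasDerivAt id_ (deriv id_ ir) ir := (hdiff ir hirS).hasDerivAt
  set d := deriv id_ ir with hddef
  have hg : HasDerivAt (fun x => x - γ' rhat + ((1 + i)/(1 + id_ x) - 1 - η' (κ * rhat)) * κ)
      (1 + ((0 * (1 + id_ ir) - (1 + i) * d) / (1 + id_ ir)^2) * κ) ir := by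
    have h1 : HasDerivAt (fun x => 1 + id_ x) d ir := by exact hd.const_add 1
    have h2 := (hasDerivAt_const ir (1 + i)).div h1 hne
    exact ((hasDerivAt_id ir).sub_const _).add (((h2.sub_const 1).sub_const _).mul_const κ)
  have heqv : id_ =ᶠ[nhds ir]
      fun x => x - γ' rhat + ((1 + i)/(1 + id_ x) - 1 - η' (κ * rhat)) * κ := by
    filter_upwards [hS.mem_nhds hirS] with x hx using heq x hx
  have hd2 : HasDerivAt id_
      (1 + ((0 * (1 + id_ ir) - (1 + i) * d) / (1 + id_ ir)^2) * κ) ir :=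
    hg.congr_of_eventuallyEq heqv
  have huniq : d = 1 + ((0 * (1 + id_ ir) - (1 + i) * d) / (1 + id_ ir)^2) * κ :=
    hd.unique hd2
  have hsq : (0:ℝ) < (1 + id_ ir)^2 := pow_pos hpos 2
  have key : (1 + κ * (1 + i)/(1 + id_ ir)^2) * d = 1 := by
    field_simp at huniq ⊢
    nlinarith [huniq]
  have hcoef : 0 < 1 + κ * (1 + i)/(1 + id_ ir)^2 := by
    have := div_pos (mul_pos hκ (by linarith : (0:ℝ) < 1 + i)) hsq
    linarith [this]
  exact ⟨key, by nlinarith [key, hcoef]⟩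
end

section
/- In the ample-reserves equilibrium, the system P: (1+i)/(1+i_r-γ'(r)) - 1 - η'(ℓ) = 0 and E: γ'(r)·r - γ(r) + η'(ℓ)·ℓ - η(ℓ) - k = 0 yields, by Cramer's rule, ∂ℓ/∂i = P_i·E_r / (P_r·E_ℓ - P_ℓ·E_r) > 0 and ∂r/∂i = -P_i·E_ℓ / (P_r·E_ℓ - P_ℓ·E_r) < 0, where P_r = (1+i)γ''(r)/(1+i_r-γ'(r))² > 0, P_ℓ = -η''(ℓ) < 0, P_i = 1/(1+i_r-γ'(r)) > 0, E_r = γ''(r)·r > 0, E_ℓ = η''(ℓ)·ℓ > 0. -/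
/-- In the ample-reserves equilibrium, the system
`P : (1+i)/(1+i_r-γ'(r)) - 1 - η'(ℓ) = 0` and
`E : γ'(r) r - γ(r) + η'(ℓ) ℓ - η(ℓ) - k = 0`
yields, by Cramer's rule,
`∂ℓ/∂i = P_i E_r / (P_r E_ℓ - P_ℓ E_r) > 0` and
`∂r/∂i = -P_i E_ℓ / (P_r E_ℓ - P_ℓ E_r) < 0`, where
`P_r = (1+i)γ''(r)/(1+i_r-γ'(r))² > 0`, `P_ℓ = -η''(ℓ) < 0`,
`P_i = 1/(1+i_r-γ'(r)) > 0`, `E_r = γ''(r) r > 0`, `E_ℓ = η''(ℓ) ℓ > 0`. -/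
theorem stmt_17 (γ η : ℝ → ℝ) (ir k : ℝ) (r ℓ : ℝ → ℝ) (S : Set ℝ) (i : ℝ)
    (hγ : Differentiable ℝ γ) (hγ' : Differentiable ℝ (deriv γ))
    (hη : Differentiable ℝ η) (hη' : Differentiable ℝ (deriv η))
    (hγ'' : ∀ x, 0 < deriv (deriv γ) x)
    (hη'' : ∀ x, 0 < deriv (deriv η) x)
    (hS : IsOpen S) (hiS : i ∈ S) (hi : 0 < i)
    (hrdiff : ∀ j ∈ S, DifferentiableAt ℝ r j)
    (hldiff : ∀ j ∈ S, DifferentiableAt ℝ ℓ j)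
    (hpos : ∀ j ∈ S, 0 < r j ∧ 0 < ℓ j ∧ 0 < 1 + ir - deriv γ (r j))
    (hP : ∀ j ∈ S, (1 + j)/(1 + ir - deriv γ (r j)) - 1 - deriv η (ℓ j) = 0)
    (hE : ∀ j ∈ S,
      deriv γ (r j) * r j - γ (r j) + deriv η (ℓ j) * ℓ j - η (ℓ j) - k = 0) :
    deriv ℓ i =
        (1/(1 + ir - deriv γ (r i))) * (deriv (deriv γ) (r i) * r i) /
          ((1 + i) * deriv (deriv γ) (r i) / (1 + ir - deriv γ (r i))^2
              * (deriv (deriv η) (ℓ i) * ℓ i)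
            - (-(deriv (deriv η) (ℓ i))) * (deriv (deriv γ) (r i) * r i)) ∧
    0 < deriv ℓ i ∧
    deriv r i =
        -((1/(1 + ir - deriv γ (r i))) * (deriv (deriv η) (ℓ i) * ℓ i)) /
          ((1 + i) * deriv (deriv γ) (r i) / (1 + ir - deriv γ (r i))^2
              * (deriv (deriv η) (ℓ i) * ℓ i)
            - (-(deriv (deriv η) (ℓ i))) * (deriv (deriv γ) (r i) * r i)) ∧
    deriv r i < 0 := by
  obtain ⟨hR, hL, hD⟩ := hpos i hiS
  have hrd : HasDerivAt r (deriv r i) i := (hrdiff i hiS).hasDerivAt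
  have hld : HasDerivAt ℓ (deriv ℓ i) i := (hldiff i hiS).hasDerivAt
  set a := deriv (deriv γ) (r i) with ha
  set b := deriv (deriv η) (ℓ i) with hb
  set R := r i
  set L := ℓ i
  set D := 1 + ir - deriv γ R with hDdef
  set r' := deriv r i
  set l' := deriv ℓ i
  have hγ'r : HasDerivAt (fun j => deriv γ (r j)) (a * r') i :=
    (hγ' R).hasDerivAt.comp i hrd
  have hη'l : HasDerivAt (fun j => deriv η (ℓ j)) (b * l') i :=
    (hη' L).hasDerivAt.comp i hld
  have hγr : HasDerivAt (fun j => γ (r j)) (deriv γ R * r') i :=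
    (hγ R).hasDerivAt.comp i hrd
  have hηl : HasDerivAt (fun j => η (ℓ j)) (deriv η L * l') i :=
    (hη L).hasDerivAt.comp i hld
  have hden : HasDerivAt (fun j => 1 + ir - deriv γ (r j)) (0 - a * r') i :=
    (hasDerivAt_const i (1 + ir)).sub hγ'r
  have hnum : HasDerivAt (fun j : ℝ => 1 + j) 1 i := by
    simpa using (hasDerivAt_id i).const_add (1 : ℝ)
  have hFP : HasDerivAt (fun j => (1 + j)/(1 + ir - deriv γ (r j)) - 1 - deriv η (ℓ j))
      ((1 * D - (1 + i) * (0 - a * r')) / D ^ 2 - b * l') i :=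
    ((hnum.div hden hD.ne').sub_const 1).sub hη'l
  have hFE : HasDerivAt (fun j =>
      deriv γ (r j) * r j - γ (r j) + deriv η (ℓ j) * ℓ j - η (ℓ j) - k)
      ((a * r' * R + deriv γ R * r' - deriv γ R * r'
        + (b * l' * L + deriv η L * l')) - deriv η L * l') i :=
    ((((hγ'r.mul hrd).sub hγr).add (hη'l.mul hld)).sub hηl).sub_const k
  have hPeq : (fun j => (1 + j)/(1 + ir - deriv γ (r j)) - 1 - deriv η (ℓ j))
      =ᶠ[nhds i] fun _ => (0:ℝ) :=
    Filter.eventuallyEq_of_mem (hS.mem_nhds hiS) hP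
  have hEeq : (fun j => deriv γ (r j) * r j - γ (r j) + deriv η (ℓ j) * ℓ j - η (ℓ j) - k)
      =ᶠ[nhds i] fun _ => (0:ℝ) :=
    Filter.eventuallyEq_of_mem (hS.mem_nhds hiS) hE
  have e1 : (1 * D - (1 + i) * (0 - a * r')) / D ^ 2 - b * l' = 0 := by
    rw [← hFP.deriv, hPeq.deriv_eq]; simp
  have e2 : a * r' * R + deriv γ R * r' - deriv γ R * r'
      + (b * l' * L + deriv η L * l') - deriv η L * l' = 0 := by
    rw [← hFE.deriv, hEeq.deriv_eq]; simp
  have e1' : D + (1 + i) * (a * r') = b * l' * D ^ 2 := by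
    have h2 : (D:ℝ)^2 ≠ 0 := pow_ne_zero 2 hD.ne'
    field_simp at e1
    linarith
  have e2' : a * r' * R + b * l' * L = 0 := by linarith
  have ha0 : 0 < a := hγ'' R
  have hb0 : 0 < b := hη'' L
  have hΔ : 0 < (1 + i) * a / D ^ 2 * (b * L) - (-b) * (a * R) := by
    have h1 : 0 < (1 + i) * a / D ^ 2 * (b * L) := by positivity
    have h2 : 0 < b * (a * R) := by positivity
    nlinarith
  have hl : l' = (1/D) * (a * R) /
      ((1 + i) * a / D ^ 2 * (b * L) - (-b) * (a * R)) := by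
    have hD2 : (D:ℝ)^2 ≠ 0 := pow_ne_zero 2 hD.ne'
    rw [eq_div_iff hΔ.ne', div_eq_mul_inv _ (D ^ 2), ← inv_pow]; have hinv : D * D⁻¹ = 1 := mul_inv_cancel₀ hD.ne'
    linear_combination ((1 + i) * a * D⁻¹ ^ 2) * e2' - (a * R * D⁻¹ ^ 2) * e1' + (a * R * D⁻¹ - a * b * R * l' * (D * D⁻¹ + 1)) * hinv
  have hr : r' = -((1/D) * (b * L)) /
      ((1 + i) * a / D ^ 2 * (b * L) - (-b) * (a * R)) := by
    have hD2 : (D:ℝ)^2 ≠ 0 := pow_ne_zero 2 hD.ne'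
    rw [eq_div_iff hΔ.ne', div_eq_mul_inv _ (D ^ 2), ← inv_pow]; have hinv : D * D⁻¹ = 1 := mul_inv_cancel₀ hD.ne'
    linear_combination (b * L * D⁻¹ ^ 2) * e1' + b * e2' + (b ^ 2 * L * l' * (D * D⁻¹ + 1) - b * L * D⁻¹) * hinv
  refine ⟨hl, ?_, hr, ?_⟩
  · rw [hl]; positivity
  · rw [hr]
    apply div_neg_of_neg_of_pos _ hΔ
    have : 0 < (1/D) * (b * L) := by positivity
    linarith
end
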